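/- arXiv:solv-int/9710019 — 4 statements merged into one kernel-verified Lean document; each statement's English description precedes it below -/
import Mathlib

section
/- For polynomials τ, q ∈ ℂ[x] and any N ≥ deg q + 1, the element τ(x)^N ∘ q(∂) of the Weyl algebra A_n(ℂ) is divisible on the right by τ(x): there exists an operator G ∈ A_n(ℂ) with τ(x)^N ∘ q(∂) = G ∘ τ(x). -/
open MvPolynomial

noncomputable section

/-- The polynomial ring `ℂ[x₁,…,xₙ]`. -/
abbrev Rn (n : ℕ) : Type := MvPolynomial (Fin n) ℂ

/-- `ℂ`-linear endomorphisms of `ℂ[x]`; differential operators live here. -/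
abbrev En (n : ℕ) : Type := Module.End ℂ (Rn n)

/-- Multiplication operator by the polynomial `f`. -/
def mulOp {n : ℕ} (f : Rn n) : En n := LinearMap.mulLeft ℂ f

/-- The partial derivative operator `∂ᵢ`. -/
def pdOp {n : ℕ} (i : Fin n) : En n := (pderiv i).toLinearMap

/-- `∂^m` for a multi-index `m`. -/
def pdPow {n : ℕ} (m : Fin n →₀ ℕ) : En n :=
  ((List.finRange n).map (fun i => pdOp i ^ m i)).prod

/-- The constant coefficient operator `q(∂)` for a polynomial `q`. -/
def cOp {n : ℕ} (q : Rn n) : En n := ∑ m ∈ q.support, q.coeff m • pdPow m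

/-- The Weyl algebra `Aₙ(ℂ)`, realized as the subalgebra of `End ℂ (ℂ[x])`
generated by all partial derivatives and all multiplication operators. -/
def WeylA (n : ℕ) : Subalgebra ℂ (En n) :=
  Algebra.adjoin ℂ (Set.range (pdOp (n := n)) ∪ Set.range (mulOp (n := n)))

lemma mulOp_mem {n : ℕ} (f : Rn n) : mulOp f ∈ WeylA n :=
  Algebra.subset_adjoin (Set.mem_union_right _ (Set.mem_range_self f))

lemma pdOp_mem {n : ℕ} (i : Fin n) : pdOp i ∈ WeylA n :=
  Algebra.subset_adjoin (Set.mem_union_left _ (Set.mem_range_self i))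

lemma cOp_mem {n : ℕ} (q : Rn n) : cOp q ∈ WeylA n := by
  apply Subalgebra.sum_mem
  intro m _
  apply Subalgebra.smul_mem
  apply Subalgebra.list_prod_mem
  intro x hx
  simp only [List.mem_map] at hx
  obtain ⟨i, -, rfl⟩ := hx
  exact pow_mem (pdOp_mem i) _

/-- Multiplication operator, as an element of the Weyl algebra. -/
def mulW {n : ℕ} (f : Rn n) : WeylA n := ⟨mulOp f, mulOp_mem f⟩

/-- Constant coefficient operator, as an element of the Weyl algebra. -/
def cOpW {n : ℕ} (q : Rn n) : WeylA n := ⟨cOp q, cOp_mem q⟩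

/-- The adjoint action `x ↦ a*x - x*a` as a linear endomorphism. -/
def adE {n : ℕ} (a : En n) : Module.End ℂ (En n) :=
  LinearMap.mulLeft ℂ a - LinearMap.mulRight ℂ a

lemma adE_apply {n : ℕ} (a x : En n) : adE a x = a * x - x * a := rfl

lemma adE_mul {n : ℕ} (a x y : En n) :
    adE a (x * y) = adE a x * y + x * adE a y := by
  simp only [adE_apply, sub_mul, mul_sub, mul_assoc]
  abel

lemma mulOp_mul {n : ℕ} (f g : Rn n) : mulOp f * mulOp g = mulOp (f * g) := by
  ext p
  simp [mulOp, Module.End.mul_apply, mul_assoc]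

lemma adE_mulOp {n : ℕ} (τ g : Rn n) : adE (mulOp τ) (mulOp g) = 0 := by
  rw [adE_apply, mulOp_mul, mulOp_mul, mul_comm τ g, sub_self]

lemma adE_pdOp {n : ℕ} (τ : Rn n) (i : Fin n) :
    adE (mulOp τ) (pdOp i) = -(mulOp (pderiv i τ)) := by
  ext p
  simp [adE_apply, Module.End.mul_apply, mulOp, pdOp, pderiv_mul]
  ring_nf

lemma adE_pow_eventually_zero {n : ℕ} (a : En n) {k K : ℕ} (hkK : k ≤ K) {x : En n}
    (hx : (adE a ^ k) x = 0) : (adE a ^ K) x = 0 := by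
  obtain ⟨j, rfl⟩ := Nat.exists_eq_add_of_le hkK
  rw [add_comm, pow_add, Module.End.mul_apply, hx, map_zero]

lemma adE_pow_mul_aux {n : ℕ} (a : En n) :
    ∀ (c b d : ℕ) (x y : En n), b + d ≤ c →
      (adE a ^ (b + 1)) x = 0 → (adE a ^ (d + 1)) y = 0 →
      (adE a ^ (b + d + 1)) (x * y) = 0 := by
  intro c
  induction c with
  | zero =>
    intro b d x y hbd hx hy
    obtain ⟨rfl, rfl⟩ : b = 0 ∧ d = 0 := by omega
    rw [pow_one] at hx hy ⊢
    rw [adE_mul, hx, hy, zero_mul, mul_zero, add_zero]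
  | succ c ih =>
    intro b d x y hbd hx hy
    rcases Nat.eq_zero_or_pos (b + d) with h0 | hpos
    · obtain ⟨rfl, rfl⟩ : b = 0 ∧ d = 0 := by omega
      rw [pow_one] at hx hy ⊢
      rw [adE_mul, hx, hy, zero_mul, mul_zero, add_zero]
    · have key : (adE a ^ (b + d + 1)) (x * y)
          = (adE a ^ (b + d)) (adE a x * y) + (adE a ^ (b + d)) (x * adE a y) := by
        rw [pow_succ, Module.End.mul_apply, adE_mul, map_add]
      rw [key]
      have h1 : (adE a ^ (b + d)) (adE a x * y) = 0 := by
        rcases Nat.eq_zero_or_pos b with rfl | hb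
        · rw [pow_one] at hx; rw [hx, zero_mul, map_zero]
        · obtain ⟨b', rfl⟩ := Nat.exists_eq_succ_of_ne_zero hb.ne'
          have hx' : (adE a ^ (b' + 1)) (adE a x) = 0 := by
            show ((adE a ^ (b' + 1)) * adE a) x = 0
            rw [← pow_succ]; exact hx
          have := ih b' d (adE a x) y (by omega) hx' hy
          have hE : b'.succ + d = b' + d + 1 := by omega
          rw [hE]; exact this
      have h2 : (adE a ^ (b + d)) (x * adE a y) = 0 := by
        rcases Nat.eq_zero_or_pos d with rfl | hd
        · rw [pow_one] at hy; rw [hy, mul_zero, map_zero]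
        · obtain ⟨d', rfl⟩ := Nat.exists_eq_succ_of_ne_zero hd.ne'
          have hy' : (adE a ^ (d' + 1)) (adE a y) = 0 := by
            show ((adE a ^ (d' + 1)) * adE a) y = 0
            rw [← pow_succ]; exact hy
          have := ih b d' x (adE a y) (by omega) hx hy'
          have hE : b + d'.succ = b + d' + 1 := by omega
          rw [hE]; exact this
      rw [h1, h2, add_zero]

lemma adE_pow_mul {n : ℕ} (a : En n) {b d : ℕ} {x y : En n}
    (hx : (adE a ^ (b + 1)) x = 0) (hy : (adE a ^ (d + 1)) y = 0) :
    (adE a ^ (b + d + 1)) (x * y) = 0 :=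
  adE_pow_mul_aux a (b + d) b d x y le_rfl hx hy

lemma adE_one {n : ℕ} (a : En n) : adE a 1 = 0 := by
  rw [adE_apply, mul_one, one_mul, sub_self]

lemma adE_pow_pdOp {n : ℕ} (τ : Rn n) (i : Fin n) (e : ℕ) :
    (adE (mulOp τ) ^ (e + 1)) (pdOp i ^ e) = 0 := by
  induction e with
  | zero => simpa [pow_one] using adE_one (mulOp τ)
  | succ e ih =>
    have h1 : (adE (mulOp τ) ^ (1 + 1)) (pdOp i) = 0 := by
      rw [pow_succ, Module.End.mul_apply, pow_one, adE_pdOp, map_neg, adE_mulOp, neg_zero]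
    have := adE_pow_mul (mulOp τ) ih h1
    rw [pow_succ (pdOp i) e]
    exact this

lemma adE_pow_list {n : ℕ} (τ : Rn n) (m : Fin n →₀ ℕ) :
    ∀ l : List (Fin n),
      (adE (mulOp τ) ^ ((l.map m).sum + 1)) ((l.map (fun i => pdOp i ^ m i)).prod) = 0 := by
  intro l
  induction l with
  | nil => simpa using adE_one (mulOp τ)
  | cons i l ih =>
    have h1 := adE_pow_pdOp τ i (m i)
    have := adE_pow_mul (mulOp τ) h1 ih
    simp only [List.map_cons, List.prod_cons, List.sum_cons]
    exact this

lemma adE_pow_pdPow {n : ℕ} (τ : Rn n) (m : Fin n →₀ ℕ) :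
    (adE (mulOp τ) ^ ((m.sum fun _ e => e) + 1)) (pdPow m) = 0 := by
  have h := adE_pow_list τ m (List.finRange n)
  have hs : ((List.finRange n).map m).sum = m.sum fun _ e => e := by
    rw [Finsupp.sum_fintype _ _ (fun _ => rfl)]
    rw [Fin.sum_univ_def]
  rwa [hs] at h

lemma binom_expand {n : ℕ} (a b : En n) (N : ℕ)
    (h : (adE a ^ N) b = 0) :
    a ^ N * b =
      (∑ k ∈ Finset.range N, N.choose k • ((adE a ^ k) b * a ^ (N - 1 - k))) * a := by
  set L : Module.End ℂ (En n) := LinearMap.mulLeft ℂ a with hLdef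
  set Rr : Module.End ℂ (En n) := LinearMap.mulRight ℂ a with hRdef
  have hL : ∀ (M : ℕ) (x : En n), (L ^ M) x = a ^ M * x := by
    intro M
    induction M with
    | zero => intro x; simp
    | succ M ih =>
      intro x
      rw [pow_succ', Module.End.mul_apply, ih, hLdef, LinearMap.mulLeft_apply,
        pow_succ', mul_assoc]
  have hR : ∀ (M : ℕ) (x : En n), (Rr ^ M) x = x * a ^ M := by
    intro M
    induction M with
    | zero => intro x; simp
    | succ M ih =>
      intro x
      rw [pow_succ', Module.End.mul_apply, hRdef, LinearMap.mulRight_apply, ih,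
        pow_succ, mul_assoc]
  have hcommLR : Commute L Rr := LinearMap.commute_mulLeft_right a a
  have hadd : L = adE a + Rr := by rw [adE]; abel
  have hcomm : Commute (adE a) Rr := by
    have hab : adE a = L - Rr := rfl
    rw [hab]
    show (L - Rr) * Rr = Rr * (L - Rr)
    ext x
    simp only [Module.End.mul_apply, LinearMap.sub_apply, hLdef, hRdef,
      LinearMap.mulLeft_apply, LinearMap.mulRight_apply, sub_mul, mul_sub, map_sub,
      mul_assoc]
  have expand : a ^ N * b = ∑ k ∈ Finset.range (N + 1),
      N.choose k • ((adE a ^ k) b * a ^ (N - k)) := by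
    have h1 : a ^ N * b = (L ^ N) b := (hL N b).symm
    rw [h1, hadd, hcomm.add_pow]
    rw [LinearMap.sum_apply]
    refine Finset.sum_congr rfl fun k hk => ?_
    have : (adE a ^ k * Rr ^ (N - k) * (N.choose k : Module.End ℂ (En n))) b
        = (N.choose k) • ((Rr ^ (N - k)) ((adE a ^ k) b)) := by
      rw [(hcomm.pow_pow k (N - k)).eq]
      rw [Module.End.mul_apply, Module.End.mul_apply]
      rw [Module.End.natCast_apply]
      rw [map_nsmul, map_nsmul]
    rw [this, hR]
  rw [expand, Finset.sum_range_succ, h, zero_mul, smul_zero, add_zero,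
    Finset.sum_mul]
  refine Finset.sum_congr rfl fun k hk => ?_
  rw [Finset.mem_range] at hk
  have : N - k = (N - 1 - k) + 1 := by omega
  rw [this, pow_succ, ← mul_assoc, smul_mul_assoc]

lemma adE_pow_mem {n : ℕ} (τ : Rn n) (k : ℕ) {x : En n} (hx : x ∈ WeylA n) :
    (adE (mulOp τ) ^ k) x ∈ WeylA n := by
  induction k with
  | zero => simpa using hx
  | succ k ih =>
    rw [pow_succ', Module.End.mul_apply]
    have : adE (mulOp τ) ((adE (mulOp τ) ^ k) x)
        = mulOp τ * (adE (mulOp τ) ^ k) x - (adE (mulOp τ) ^ k) x * mulOp τ := rfl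
    rw [this]
    exact sub_mem (mul_mem (mulOp_mem τ) ih) (mul_mem ih (mulOp_mem τ))

lemma adE_pow_cOp {n : ℕ} (τ q : Rn n) {N : ℕ} (hN : q.totalDegree + 1 ≤ N) :
    (adE (mulOp τ) ^ N) (cOp q) = 0 := by
  rw [cOp, map_sum]
  refine Finset.sum_eq_zero fun m hm => ?_
  rw [map_smul]
  have hdeg : (m.sum fun _ e => e) + 1 ≤ N :=
    le_trans (Nat.add_le_add_right (Finset.le_sup (f := fun s => s.sum fun _ e => e) hm) 1) hN
  rw [adE_pow_eventually_zero _ hdeg (adE_pow_pdPow τ m), smul_zero]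

/-- For `τ, q ∈ ℂ[x]` and any `N ≥ deg q + 1`, the element
`τ(x)^N ∘ q(∂)` of the Weyl algebra is divisible on the right by `τ(x)`:
there is `G ∈ Aₙ(ℂ)` with `τ(x)^N ∘ q(∂) = G ∘ τ(x)`. -/
theorem right_divisible_by_tau (n : ℕ) (τ q : Rn n) (N : ℕ)
    (hN : q.totalDegree + 1 ≤ N) :
    ∃ G ∈ WeylA n, (mulOp τ) ^ N * cOp q = G * mulOp τ := by
  refine ⟨∑ k ∈ Finset.range N,
      N.choose k • ((adE (mulOp τ) ^ k) (cOp q) * (mulOp τ) ^ (N - 1 - k)), ?_, ?_⟩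
  · refine Subalgebra.sum_mem _ fun k _ => ?_
    exact nsmul_mem (mul_mem (adE_pow_mem τ k (cOp_mem q)) (pow_mem (mulOp_mem τ) _)) _
  · exact binom_expand (mulOp τ) (cOp q) N (adE_pow_cOp τ q hN)
end
end

section
/- Let q ∈ ℂ[ξ] be a polynomial in n variables, τ ∈ ℂ[x], and let m_q^∨ be the left ideal of the Weyl algebra D = A_n(ℂ) generated by q(∂). Let e^∨ := τ(x) + D m_q^∨ in M^∨ := D/D m_q^∨, and let 𝔄^∨ := Ann_D(e^∨). Then for N > deg q, the operator G(x,∂) := τ(x)^N ∘ q(∂) ∘ τ(x)^{-1}, a priori an element of the localization D_τ, actually lies in D and belongs to 𝔄^∨. -/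
set_option maxHeartbeats 1000000
set_option synthInstance.maxHeartbeats 400000

open MvPolynomial

noncomputable section

/-- The localization `ℂ[x, τ⁻¹]` of `ℂ[x]` at `τ`, i.e. the regular functions on
`X_τ = ℂⁿ \ τ⁻¹(0)`. -/
abbrev Sloc (n : ℕ) (τ : Rn n) : Type := Localization.Away τ

/-- `ℂ`-linear endomorphisms of `ℂ[x, τ⁻¹]`; the localized Weyl algebra `D_τ` lives here. -/
abbrev ES (n : ℕ) (τ : Rn n) : Type := Module.End ℂ (Sloc n τ)

/-- Multiplication operator by `s ∈ ℂ[x, τ⁻¹]`. -/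
def mulE {n : ℕ} {τ : Rn n} (s : Sloc n τ) : ES n τ := LinearMap.mulLeft ℂ s

/-- The constant coefficient operator `q(∂)` built from a family `d` of (extended)
partial derivative operators. -/
def cOpE {n : ℕ} {τ : Rn n} (d : Fin n → ES n τ) (q : Rn n) : ES n τ :=
  ∑ m ∈ q.support, q.coeff m • ((List.finRange n).map (fun i => d i ^ m i)).prod

/-- The Darboux operator `D = τ(x) ∘ q(∂) ∘ τ(x)⁻¹`, where `t = τ⁻¹`. -/
def DarbouxOp {n : ℕ} (τ : Rn n) (d : Fin n → ES n τ) (q : Rn n) (t : Sloc n τ) : ES n τ :=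
  mulE (algebraMap (Rn n) (Sloc n τ) τ) * cOpE d q * mulE t

/-- The (un-localized) Weyl algebra `Aₙ(ℂ)`, realized inside `End ℂ (ℂ[x,τ⁻¹])` as the
subalgebra generated by the extended partial derivatives and multiplication operators by
polynomials. -/
def WeylInS {n : ℕ} {τ : Rn n} (d : Fin n → ES n τ) : Subalgebra ℂ (ES n τ) :=
  Algebra.adjoin ℂ
    (Set.range d ∪ Set.range (fun r : Rn n => mulE (algebraMap (Rn n) (Sloc n τ) r)))


namespace DarbouxAux

variable {n : ℕ} {τ : Rn n}

lemma mulE_apply (s x : Sloc n τ) : mulE s x = s * x := rfl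

lemma mulE_mul (a b : Sloc n τ) : mulE a * mulE b = mulE (a * b) := by
  ext x
  simp only [Module.End.mul_apply, mulE_apply, mul_assoc]

lemma mulE_one : (mulE (1 : Sloc n τ)) = 1 := by
  ext x
  simp only [mulE_apply, one_mul, Module.End.one_apply]

lemma mulE_add (a b : Sloc n τ) : mulE a + mulE b = mulE (a + b) := by
  ext x
  simp only [LinearMap.add_apply, mulE_apply]
  ring

lemma mulE_zero : mulE (0 : Sloc n τ) = 0 := by
  ext x
  simp only [mulE_apply, LinearMap.zero_apply]
  ring

/-- Multiplication by `τ`. -/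
def Mt (τ : Rn n) : ES n τ := mulE (algebraMap (Rn n) (Sloc n τ) τ)

/-- Multiplication by `-τ`. -/
def nMt (τ : Rn n) : ES n τ := mulE (algebraMap (Rn n) (Sloc n τ) (-τ))

lemma mulES_add (X Y Z : ES n τ) : X * (Y + Z) = X * Y + X * Z := by
  ext x
  simp only [Module.End.mul_apply, LinearMap.add_apply, map_add]

lemma addES_mul (X Y Z : ES n τ) : (X + Y) * Z = X * Z + Y * Z := by
  ext x
  simp only [Module.End.mul_apply, LinearMap.add_apply]

lemma zeroES_mul (Z : ES n τ) : (0 : ES n τ) * Z = 0 := by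
  ext x
  simp only [Module.End.mul_apply, LinearMap.zero_apply]

lemma mulES_zero (Z : ES n τ) : Z * (0 : ES n τ) = 0 := by
  ext x
  simp only [Module.End.mul_apply, LinearMap.zero_apply, map_zero]

lemma nMt_add_Mt : nMt τ + Mt τ = 0 := by
  rw [nMt, Mt, mulE_add, ← map_add, neg_add_cancel, map_zero, mulE_zero]

lemma Mt_add_nMt : Mt τ + nMt τ = 0 := by
  rw [nMt, Mt, mulE_add, ← map_add, add_neg_cancel, map_zero, mulE_zero]

/-- The commutator `[Mτ, ·]` as a linear map, written without subtraction on `ES`. -/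
def delE (τ : Rn n) : ES n τ →ₗ[ℂ] ES n τ where
  toFun X := Mt τ * X + X * nMt τ
  map_add' X Y := by
    ext x
    simp only [Module.End.mul_apply, LinearMap.add_apply, map_add, Mt, nMt, mulE_apply]
    ring
  map_smul' c X := by
    ext x
    simp only [Module.End.mul_apply, LinearMap.add_apply, LinearMap.smul_apply,
      RingHom.id_apply, Mt, nMt, mulE_apply, map_smul]
    rw [smul_add]

lemma delE_apply (X : ES n τ) : delE τ X = Mt τ * X + X * nMt τ := rfl

lemma Mt_mul_eq (X : ES n τ) : Mt τ * X = delE τ X + X * Mt τ := by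
  rw [delE_apply, add_assoc, ← mulES_add, nMt_add_Mt, mulES_zero, add_zero]

lemma X_nMt_Mt (X Y : ES n τ) : X * nMt τ * Y + X * (Mt τ * Y) = 0 := by
  rw [mul_assoc, ← mulES_add, ← addES_mul, nMt_add_Mt, zeroES_mul, mulES_zero]

lemma delE_mul (X Y : ES n τ) : delE τ (X * Y) = delE τ X * Y + X * delE τ Y := by
  rw [delE_apply, delE_apply, delE_apply, addES_mul, mulES_add,
    ← mul_assoc (Mt τ) X Y, mul_assoc X Y (nMt τ),
    add_assoc (Mt τ * X * Y), ← add_assoc (X * nMt τ * Y), X_nMt_Mt, zero_add]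

lemma delE_mulE (s : Sloc n τ) : delE τ (mulE s) = 0 := by
  have h : algebraMap (Rn n) (Sloc n τ) τ * s + s * algebraMap (Rn n) (Sloc n τ) (-τ) = 0 := by
    rw [map_neg]
    ring
  rw [delE_apply, Mt, nMt, mulE_mul, mulE_mul, mulE_add, h, mulE_zero]

lemma delE_one : delE τ (1 : ES n τ) = 0 := by
  rw [delE_apply, mul_one, one_mul, Mt_add_nMt]

lemma delE_d (d : Fin n → ES n τ)
    (hLeib : ∀ (i : Fin n) (a b : Sloc n τ), d i (a * b) = a * d i b + d i a * b)
    (hcomp : ∀ (i : Fin n) (r : Rn n),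
      d i (algebraMap (Rn n) (Sloc n τ) r) = algebraMap (Rn n) (Sloc n τ) (pderiv i r))
    (i : Fin n) :
    delE τ (d i) = mulE (algebraMap (Rn n) (Sloc n τ) (-(pderiv i τ))) := by
  ext x
  simp only [delE_apply, Module.End.mul_apply, LinearMap.add_apply, Mt, nMt, mulE_apply]
  rw [hLeib i (algebraMap (Rn n) (Sloc n τ) (-τ)) x, hcomp i (-τ), map_neg, map_neg, map_neg]
  ring

/-- the interpretation of a letter -/
def itp (d : Fin n → ES n τ) : (Fin n ⊕ Sloc n τ) → ES n τ := Sum.elim d mulE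

/-- Order filtration: span of words with at most `k` derivative letters. -/
def Pfil (d : Fin n → ES n τ) (k : ℕ) : Submodule ℂ (ES n τ) :=
  Submodule.span ℂ {x | ∃ L : List (Fin n ⊕ Sloc n τ),
    L.countP (fun a => a.isLeft) ≤ k ∧ x = (L.map (itp d)).prod}

lemma Pfil_mono (d : Fin n → ES n τ) {k k' : ℕ} (h : k ≤ k') : Pfil d k ≤ Pfil d k' :=
  Submodule.span_mono (fun x ⟨L, h1, h2⟩ => ⟨L, h1.trans h, h2⟩)

lemma Pfil_cons (d : Fin n → ES n τ) (a : Fin n ⊕ Sloc n τ) {k j : ℕ}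
    (hj : k + List.countP (fun a => a.isLeft) [a] ≤ j) {x : ES n τ} (hx : x ∈ Pfil d k) :
    itp d a * x ∈ Pfil d j := by
  have hmap : Submodule.map (LinearMap.mulLeft ℂ (itp d a)) (Pfil d k) ≤ Pfil d j := by
    rw [Pfil, Submodule.map_span, Submodule.span_le]
    rintro _ ⟨_, ⟨L, hc, rfl⟩, rfl⟩
    refine Submodule.subset_span ⟨a :: L, ?_, ?_⟩
    · simp only [List.countP_cons] at hj ⊢
      omega
    · simp only [LinearMap.mulLeft_apply, List.map_cons, List.prod_cons]
  exact hmap ⟨x, hx, rfl⟩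

lemma del_prod_zero (d : Fin n → ES n τ) :
    ∀ L : List (Fin n ⊕ Sloc n τ), L.countP (fun a => a.isLeft) = 0 →
      delE τ ((L.map (itp d)).prod) = 0 := by
  intro L
  induction L with
  | nil => intro _; rw [List.map_nil, List.prod_nil]; exact delE_one
  | cons a L ih =>
    intro hc
    rw [List.countP_cons] at hc
    cases a with
    | inl i => simp at hc
    | inr s =>
      have hL : L.countP (fun a => a.isLeft) = 0 := by omega
      rw [List.map_cons, List.prod_cons, delE_mul, ih hL, mulES_zero, add_zero,
        show itp d (Sum.inr s) = mulE s from rfl, delE_mulE, zeroES_mul]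

lemma delE_prod_mem (d : Fin n → ES n τ)
    (hLeib : ∀ (i : Fin n) (a b : Sloc n τ), d i (a * b) = a * d i b + d i a * b)
    (hcomp : ∀ (i : Fin n) (r : Rn n),
      d i (algebraMap (Rn n) (Sloc n τ) r) = algebraMap (Rn n) (Sloc n τ) (pderiv i r)) :
    ∀ (L : List (Fin n ⊕ Sloc n τ)) (k : ℕ), L.countP (fun a => a.isLeft) ≤ k + 1 →
      delE τ ((L.map (itp d)).prod) ∈ Pfil d k := by
  intro L
  induction L with
  | nil => intro k _; rw [List.map_nil, List.prod_nil, delE_one]; exact zero_mem _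
  | cons a L ih =>
    intro k hc
    rw [List.countP_cons] at hc
    rw [List.map_cons, List.prod_cons, delE_mul]
    cases a with
    | inl i =>
      have hone : (if (Sum.inl i : Fin n ⊕ Sloc n τ).isLeft = true then 1 else 0) = 1 := rfl
      rw [hone] at hc
      have hc' : L.countP (fun a => a.isLeft) ≤ k := by omega
      refine Submodule.add_mem _ ?_ ?_
      · rw [show itp d (Sum.inl i) = d i from rfl, delE_d d hLeib hcomp i]
        refine Submodule.subset_span
          ⟨Sum.inr (algebraMap (Rn n) (Sloc n τ) (-(pderiv i τ))) :: L, ?_, ?_⟩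
        · rw [List.countP_cons]
          have h0 : (if (Sum.inr (algebraMap (Rn n) (Sloc n τ) (-(pderiv i τ))) :
              Fin n ⊕ Sloc n τ).isLeft = true then 1 else 0) = 0 := rfl
          omega
        · rw [List.map_cons, List.prod_cons]
          rfl
      · cases k with
        | zero =>
          rw [del_prod_zero d L (Nat.le_zero.mp hc'), mulES_zero]
          exact zero_mem _
        | succ m =>
          rw [show itp d (Sum.inl i) = d i from rfl]
          exact Pfil_cons d (Sum.inl i) (k := m) (j := m + 1)
            (by rw [List.countP_cons]; rfl) (ih m (by omega))
    | inr s =>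
      rw [show itp d (Sum.inr s) = mulE s from rfl, delE_mulE, zeroES_mul, zero_add]
      have hzero : (if (Sum.inr s : Fin n ⊕ Sloc n τ).isLeft = true then 1 else 0) = 0 := rfl
      rw [hzero] at hc
      exact Pfil_cons d (Sum.inr s) (k := k) (j := k)
        (by rw [List.countP_cons]; rfl) (ih k (by omega))

lemma delE_iter_zero (d : Fin n → ES n τ)
    (hLeib : ∀ (i : Fin n) (a b : Sloc n τ), d i (a * b) = a * d i b + d i a * b)
    (hcomp : ∀ (i : Fin n) (r : Rn n),
      d i (algebraMap (Rn n) (Sloc n τ) r) = algebraMap (Rn n) (Sloc n τ) (pderiv i r)) :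
    ∀ (k : ℕ) (x : ES n τ), x ∈ Pfil d k → (delE τ)^[k + 1] x = 0 := by
  intro k
  induction k with
  | zero =>
    intro x hx
    have hker : Pfil d 0 ≤ LinearMap.ker (delE τ) := by
      rw [Pfil, Submodule.span_le]
      rintro _ ⟨L, hc, rfl⟩
      exact LinearMap.mem_ker.mpr (del_prod_zero d L (Nat.le_zero.mp hc))
    have h1 : delE τ x = 0 := LinearMap.mem_ker.mp (hker hx)
    rw [Function.iterate_one]
    exact h1
  | succ m ih =>
    intro x hx
    have hmap : Submodule.map (delE τ) (Pfil d (m + 1)) ≤ Pfil d m := by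
      rw [Pfil, Submodule.map_span, Submodule.span_le]
      rintro _ ⟨_, ⟨L, hc, rfl⟩, rfl⟩
      exact delE_prod_mem d hLeib hcomp L m hc
    have hdx : delE τ x ∈ Pfil d m := hmap ⟨x, hx, rfl⟩
    rw [Function.iterate_succ_apply]
    exact ih _ hdx

lemma list_prod_mem_weyl (S : Subalgebra ℂ (ES n τ)) :
    ∀ L : List (ES n τ), (∀ x ∈ L, x ∈ S) → L.prod ∈ S := by
  intro L
  induction L with
  | nil => intro _; rw [List.prod_nil]; exact S.one_mem
  | cons a L ih =>
    intro h
    rw [List.prod_cons]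
    exact S.mul_mem (h a List.mem_cons_self) (ih fun x hx => h x (List.mem_cons_of_mem a hx))

lemma pow_mem_weyl (S : Subalgebra ℂ (ES n τ)) {x : ES n τ} (hx : x ∈ S) :
    ∀ m : ℕ, x ^ m ∈ S := by
  intro m
  induction m with
  | zero => rw [pow_zero]; exact S.one_mem
  | succ m ih => rw [pow_succ]; exact S.mul_mem ih hx

lemma main (d : Fin n → ES n τ) :
    ∀ (N : ℕ) (X : ES n τ), X ∈ WeylInS d → (delE τ)^[N] X = 0 →
      ∃ A ∈ WeylInS d, (Mt τ) ^ N * X = A * Mt τ := by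
  have hMt : Mt τ ∈ WeylInS d := Algebra.subset_adjoin (Or.inr ⟨τ, rfl⟩)
  have hnMt : nMt τ ∈ WeylInS d := Algebra.subset_adjoin (Or.inr ⟨-τ, rfl⟩)
  intro N
  induction N with
  | zero =>
    intro X _ h0
    simp only [Function.iterate_zero, id_eq] at h0
    refine ⟨0, (WeylInS d).zero_mem, ?_⟩
    rw [h0, mulES_zero, zeroES_mul]
  | succ N ih =>
    intro X hX h0
    have hdX : delE τ X ∈ WeylInS d := by
      rw [delE_apply]
      exact (WeylInS d).add_mem ((WeylInS d).mul_mem hMt hX) ((WeylInS d).mul_mem hX hnMt)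
    obtain ⟨A, hA, hEq⟩ := ih (delE τ X) hdX (by rw [← Function.iterate_succ_apply]; exact h0)
    refine ⟨A + (Mt τ) ^ N * X,
      (WeylInS d).add_mem hA ((WeylInS d).mul_mem (pow_mem_weyl _ hMt N) hX), ?_⟩
    rw [pow_succ, mul_assoc, Mt_mul_eq X, mulES_add, hEq, ← mul_assoc, ← addES_mul]

lemma cOpE_mem_weyl (d : Fin n → ES n τ) (q : Rn n) : cOpE d q ∈ WeylInS d := by
  refine Submodule.sum_mem (Subalgebra.toSubmodule (WeylInS d)) fun m _ => ?_
  refine (WeylInS d).smul_mem ?_ _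
  refine list_prod_mem_weyl _ _ ?_
  intro x hx
  simp only [List.mem_map] at hx
  obtain ⟨i, -, rfl⟩ := hx
  exact pow_mem_weyl _ (Algebra.subset_adjoin (Or.inl ⟨i, rfl⟩)) _

lemma cOpE_mem_Pfil (d : Fin n → ES n τ) (q : Rn n) : cOpE d q ∈ Pfil d q.totalDegree := by
  refine Submodule.sum_mem _ fun m hm => Submodule.smul_mem _ _ ?_
  refine Submodule.subset_span
    ⟨(List.finRange n).flatMap (fun i => List.replicate (m i) (Sum.inl i)), ?_, ?_⟩
  · rw [List.countP_flatMap]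
    have hcnt : ∀ i ∈ List.finRange n,
        (List.countP (fun a => a.isLeft) ∘ fun i : Fin n =>
          List.replicate (m i) (Sum.inl i : Fin n ⊕ Sloc n τ)) i = m i := by
      intro i _
      simp [List.countP_replicate]
    rw [List.map_congr_left hcnt]
    have h1 : ((List.finRange n).map fun i => m i).sum = ∑ i : Fin n, m i :=
      (Fin.sum_univ_def fun i => m i).symm
    rw [h1]
    have h2 : m.sum (fun _ e => e) = ∑ i : Fin n, m i :=
      Finsupp.sum_fintype m (fun _ e => e) (fun _ => rfl)
    rw [← h2]
    exact MvPolynomial.le_totalDegree hm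
  · rw [List.flatMap_def, List.map_flatten, List.map_map, List.prod_flatten, List.map_map]
    congr 1
    refine List.map_congr_left fun i _ => ?_
    simp only [Function.comp_apply, List.map_replicate, List.prod_replicate]
    rfl

end DarbouxAux

open DarbouxAux in
/-- Let `q, τ ∈ ℂ[x]`, and let `𝔄^∨` be the annihilator of
`e^∨ = τ + D·q(∂)` in `D/D·q(∂)`, i.e. the set of `T ∈ D` with `T ∘ τ(x) ∈ D·q(∂)`.
For `N > deg q`, the operator `G := τ(x)^N ∘ q(∂) ∘ τ(x)⁻¹`, a priori an element of the
localization `D_τ`, actually lies in the Weyl algebra `D = Aₙ(ℂ)` and belongs to `𝔄^∨`. -/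
theorem G_in_weyl_and_annihilator (n : ℕ) (τ q : Rn n) (d : Fin n → ES n τ)
    (hLeib : ∀ (i : Fin n) (a b : Sloc n τ), d i (a * b) = a * d i b + d i a * b)
    (hcomp : ∀ (i : Fin n) (r : Rn n),
      d i (algebraMap (Rn n) (Sloc n τ) r) = algebraMap (Rn n) (Sloc n τ) (pderiv i r))
    (t : Sloc n τ) (ht : algebraMap (Rn n) (Sloc n τ) τ * t = 1)
    (N : ℕ) (hN : q.totalDegree < N) :
    (mulE (algebraMap (Rn n) (Sloc n τ) τ)) ^ N * cOpE d q * mulE t ∈ WeylInS d ∧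
    ∃ A ∈ WeylInS d,
      ((mulE (algebraMap (Rn n) (Sloc n τ) τ)) ^ N * cOpE d q * mulE t) *
          mulE (algebraMap (Rn n) (Sloc n τ) τ) = A * cOpE d q := by
  have hMt : Mt τ ∈ WeylInS d := Algebra.subset_adjoin (Or.inr ⟨τ, rfl⟩)
  have hiter : (delE τ)^[N] (cOpE d q) = 0 := by
    obtain ⟨M, rfl⟩ : ∃ M, N = M + 1 := ⟨N - 1, by omega⟩
    exact delE_iter_zero d hLeib hcomp M _ (Pfil_mono d (by omega) (cOpE_mem_Pfil d q))
  obtain ⟨A, hA, hEq⟩ := main d N (cOpE d q) (cOpE_mem_weyl d q) hiter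
  have hEq' : mulE (algebraMap (Rn n) (Sloc n τ) τ) ^ N * cOpE d q
      = A * mulE (algebraMap (Rn n) (Sloc n τ) τ) := hEq
  constructor
  · have hG : mulE (algebraMap (Rn n) (Sloc n τ) τ) ^ N * cOpE d q * mulE t = A := by
      rw [hEq', mul_assoc, mulE_mul, ht, mulE_one, mul_one]
    rw [hG]
    exact hA
  · refine ⟨mulE (algebraMap (Rn n) (Sloc n τ) τ) ^ N, pow_mem_weyl _ hMt N, ?_⟩
    rw [mul_assoc, mulE_mul, mul_comm t, ht, mulE_one, mul_one]
end
end

section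
/- Let τ, q ∈ ℂ[x] and define ψ(x,ξ) := P(x,ξ)e^{⟨x,ξ⟩} where P e^{⟨x,ξ⟩} = τ(x)^{-1}·q(∂_x)(τ(x)e^{⟨x,ξ⟩}). Then τ(∂_ξ) ψ(x,ξ) = q(ξ) τ(x) e^{⟨x,ξ⟩}, where τ(∂_ξ) acts on ψ as a constant-coefficient differential operator in the spectral variables ξ. -/
set_option maxHeartbeats 1000000
set_option synthInstance.maxHeartbeats 1000000

open MvPolynomial

noncomputable section

/-- The module `ℂ[x,τ⁻¹][ξ]·e^{⟨x,ξ⟩}`: an element `P(x,ξ)e^{⟨x,ξ⟩}` is recorded by the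
polynomial `P` in the spectral variables `ξ` with coefficients in `ℂ[x,τ⁻¹]`. -/
abbrev Wexp (n : ℕ) (τ : Rn n) : Type := MvPolynomial (Fin n) (Sloc n τ)

/-- The constant coefficient operator `p(D)` built from a commuting family `D` of
operators (one for each variable). -/
def cOpGen {n : ℕ} {τ : Rn n} (D : Fin n → Module.End ℂ (Wexp n τ)) (p : Rn n) :
    Module.End ℂ (Wexp n τ) :=
  ∑ m ∈ p.support, p.coeff m • ((List.finRange n).map (fun i => D i ^ m i)).prod

/-- The image of a polynomial `p ∈ ℂ[x]` in `ℂ[x,τ⁻¹][ξ]`, substituting the spectral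
variables `ξ` for `x` (i.e. the function `p(ξ)`). -/
def toXi {n : ℕ} (τ : Rn n) (p : Rn n) : Wexp n τ :=
  MvPolynomial.map ((algebraMap (Rn n) (Sloc n τ)).comp (MvPolynomial.C : ℂ →+* Rn n)) p

namespace BAux

variable {n : ℕ} {τ : Rn n}

/-- helper : `monomial (k + (m - eᵢ)) (s * m i) = monomial (k + m - eᵢ) (s * m i)`. -/
theorem mono_helper (i : Fin n) (m k : Fin n →₀ ℕ) (s : Sloc n τ) :
    (monomial (k + (m - Finsupp.single i 1)) (s * (m i : Sloc n τ)) : Wexp n τ) =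
      monomial (k + m - Finsupp.single i 1) (s * (m i : Sloc n τ)) := by
  rcases Nat.eq_zero_or_pos (m i) with h | h
  · simp [h]
  · have he : k + (m - Finsupp.single i 1) = k + m - Finsupp.single i 1 := by
      ext j
      rcases eq_or_ne j i with rfl | hj
      · simp only [Finsupp.add_apply, Finsupp.tsub_apply, Finsupp.single_eq_same]
        omega
      · simp [Finsupp.single_eq_of_ne' (Ne.symm hj)]
    rw [he]

theorem d_mul_natCast (d : Fin n → ES n τ) (j : Fin n) (s : Sloc n τ) (k : ℕ) :
    d j (s * (k : Sloc n τ)) = d j s * (k : Sloc n τ) := by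
  have h1 : s * (k : Sloc n τ) = k • s := by rw [nsmul_eq_mul, mul_comm]
  have h2 : d j s * (k : Sloc n τ) = k • d j s := by rw [nsmul_eq_mul, mul_comm]
  rw [h1, h2, map_nsmul]

theorem dxi_dx_commute (d : Fin n → ES n τ)
    (hLeib : ∀ (i : Fin n) (a b : Sloc n τ), d i (a * b) = a * d i b + d i a * b)
    (hcomp : ∀ (i : Fin n) (r : Rn n),
      d i (algebraMap (Rn n) (Sloc n τ) r) = algebraMap (Rn n) (Sloc n τ) (pderiv i r))
    (Dx : Fin n → Module.End ℂ (Wexp n τ))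
    (hDx : ∀ (i : Fin n) (m : Fin n →₀ ℕ) (s : Sloc n τ),
      Dx i (monomial m s) = monomial m (d i s) + X i * monomial m s)
    (Dxi : Fin n → Module.End ℂ (Wexp n τ))
    (hDxi : ∀ (i : Fin n) (w : Wexp n τ),
      Dxi i w = pderiv i w + C (algebraMap (Rn n) (Sloc n τ) (X i)) * w)
    (i j : Fin n) : Commute (Dxi i) (Dx j) := by
  apply LinearMap.ext
  intro w
  simp only [Module.End.mul_apply]
  induction w using MvPolynomial.induction_on' with
  | add p q hp hq => simp only [map_add, hp, hq]
  | monomial m s =>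
    set am := algebraMap (Rn n) (Sloc n τ) with ham
    have hXmul : ∀ (k : Fin n) (u : Fin n →₀ ℕ) (a : Sloc n τ),
        (X k : Wexp n τ) * monomial u a = monomial (Finsupp.single k 1 + u) a := by
      intro k u a
      rw [X, monomial_mul, one_mul]
    have hCmul : ∀ (u : Fin n →₀ ℕ) (a b : Sloc n τ),
        (C a : Wexp n τ) * monomial u b = monomial u (a * b) := fun u a b => C_mul_monomial
    -- expand LHS
    rw [hDx j m s, map_add, hDxi i (monomial m (d j s)), hDxi i (X j * monomial m s),
      hXmul j m s, pderiv_monomial, pderiv_monomial, hCmul, hCmul]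
    -- expand RHS
    rw [hDxi i (monomial m s), map_add, pderiv_monomial, hCmul,
      hDx j _ _, hDx j _ _, hXmul, hXmul]
    rw [d_mul_natCast d j s (m i)]
    have hdx : d j (am (X i) * s) = am (X i) * d j s + am (pderiv j (X i)) * s := by
      rw [hLeib j (am (X i)) s, hcomp j (X i)]
    rw [hdx]
    rcases eq_or_ne i j with rfl | hij
    · -- i = j
      rw [pderiv_X_self, map_one, one_mul]
      have h1 : (Finsupp.single i 1 + m - Finsupp.single i 1 : Fin n →₀ ℕ) = m := by
        ext k; simp only [Finsupp.tsub_apply, Finsupp.add_apply]; omega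
      rw [mono_helper i m (Finsupp.single i 1) s, h1]
      simp only [Finsupp.add_apply, Finsupp.single_eq_same]
      have h3 : s * ((1 + m i : ℕ) : Sloc n τ) = s * (m i : Sloc n τ) + s := by
        push_cast; ring
      rw [h3, map_add, map_add]
      abel
    · -- i ≠ j
      rw [pderiv_X_of_ne hij, map_zero, zero_mul, add_zero]
      simp only [Finsupp.add_apply, Finsupp.single_eq_of_ne' (Ne.symm hij), zero_add]
      have h2 : (Finsupp.single j 1 + m - Finsupp.single i 1 : Fin n →₀ ℕ) =
          Finsupp.single j 1 + (m - Finsupp.single i 1) := by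
        ext k
        rcases eq_or_ne k i with rfl | hk
        · simp [Finsupp.single_eq_of_ne' (Ne.symm hij)]
        · simp only [Finsupp.tsub_apply, Finsupp.add_apply,
            Finsupp.single_eq_of_ne' (Ne.symm hk)]
          omega
      rw [h2]
      abel


theorem commute_cOpGen {D : Fin n → Module.End ℂ (Wexp n τ)} {A : Module.End ℂ (Wexp n τ)}
    (h : ∀ i, Commute A (D i)) (p : Rn n) : Commute A (cOpGen D p) := by
  unfold cOpGen
  refine Commute.sum_right _ _ _ fun m _ => ?_
  refine Commute.smul_right ?_ _
  refine Commute.list_prod_right _ _ fun b hb => ?_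
  simp only [List.mem_map] at hb
  obtain ⟨i, -, rfl⟩ := hb
  exact (h i).pow_right _

theorem algebraMap_C_eq (c : ℂ) :
    algebraMap ℂ (Sloc n τ) c = algebraMap (Rn n) (Sloc n τ) (C c) := by
  rw [IsScalarTower.algebraMap_apply ℂ (Rn n) (Sloc n τ)]
  rfl

theorem Dxi_pow_C (Dxi : Fin n → Module.End ℂ (Wexp n τ))
    (hDxi : ∀ (i : Fin n) (w : Wexp n τ),
      Dxi i w = pderiv i w + C (algebraMap (Rn n) (Sloc n τ) (X i)) * w)
    (i : Fin n) (k : ℕ) (s : Sloc n τ) :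
    (Dxi i ^ k) (C s : Wexp n τ) = C (algebraMap (Rn n) (Sloc n τ) (X i) ^ k * s) := by
  induction k generalizing s with
  | zero => simp
  | succ k ih =>
    rw [pow_succ, Module.End.mul_apply]
    have h1 : Dxi i (C s : Wexp n τ) = C (algebraMap (Rn n) (Sloc n τ) (X i) * s) := by
      rw [hDxi i, pderiv_C, zero_add, ← C_mul]
    rw [h1, ih]
    congr 1
    ring

theorem listProd_Dxi_C (Dxi : Fin n → Module.End ℂ (Wexp n τ))
    (hDxi : ∀ (i : Fin n) (w : Wexp n τ),
      Dxi i w = pderiv i w + C (algebraMap (Rn n) (Sloc n τ) (X i)) * w)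
    (m : Fin n →₀ ℕ) :
    ∀ (l : List (Fin n)) (s : Sloc n τ),
      ((l.map fun i => Dxi i ^ m i).prod) (C s : Wexp n τ) =
        C ((l.map fun i => algebraMap (Rn n) (Sloc n τ) (X i) ^ m i).prod * s) := by
  intro l
  induction l with
  | nil => intro s; simp
  | cons a l ih =>
    intro s
    rw [List.map_cons, List.prod_cons, Module.End.mul_apply, ih s,
      Dxi_pow_C Dxi hDxi a (m a), List.map_cons, List.prod_cons, mul_assoc]

theorem cOpGen_Dxi_C (Dxi : Fin n → Module.End ℂ (Wexp n τ))
    (hDxi : ∀ (i : Fin n) (w : Wexp n τ),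
      Dxi i w = pderiv i w + C (algebraMap (Rn n) (Sloc n τ) (X i)) * w)
    (p : Rn n) (s : Sloc n τ) :
    cOpGen Dxi p (C s : Wexp n τ) = C (algebraMap (Rn n) (Sloc n τ) p * s) := by
  set am := algebraMap (Rn n) (Sloc n τ) with ham
  have hprod : ∀ m : Fin n →₀ ℕ,
      ((List.finRange n).map fun i => am (X i) ^ m i).prod = am (monomial m (1 : ℂ)) := by
    intro m
    rw [← Fin.prod_univ_def fun i => am (X i) ^ m i]
    rw [monomial_eq, map_one, one_mul]
    rw [Finsupp.prod_pow, map_prod]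
    simp [map_pow]
  unfold cOpGen
  rw [LinearMap.sum_apply]
  have hterm : ∀ m ∈ p.support,
      (p.coeff m • ((List.finRange n).map fun i => Dxi i ^ m i).prod) (C s : Wexp n τ) =
        C (am (monomial m (p.coeff m)) * s) := by
    intro m _
    rw [LinearMap.smul_apply, listProd_Dxi_C Dxi hDxi m (List.finRange n) s, hprod m]
    rw [← monomial_zero' (R := Sloc n τ) (σ := Fin n), smul_monomial]
    congr 1
    rw [← smul_mul_assoc]
    congr 1
    rw [Algebra.smul_def, algebraMap_C_eq (n := n) (τ := τ), ← ham, ← map_mul,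
      C_mul_monomial, mul_one]
  rw [Finset.sum_congr rfl hterm, ← map_sum, ← Finset.sum_mul, ← map_sum, ← as_sum]

theorem d_one_eq_zero (d : Fin n → ES n τ)
    (hcomp : ∀ (i : Fin n) (r : Rn n),
      d i (algebraMap (Rn n) (Sloc n τ) r) = algebraMap (Rn n) (Sloc n τ) (pderiv i r))
    (j : Fin n) : d j (1 : Sloc n τ) = 0 := by
  rw [← (algebraMap (Rn n) (Sloc n τ)).map_one, hcomp]
  simp

theorem Dx_pow_monomial_one (d : Fin n → ES n τ)
    (hcomp : ∀ (i : Fin n) (r : Rn n),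
      d i (algebraMap (Rn n) (Sloc n τ) r) = algebraMap (Rn n) (Sloc n τ) (pderiv i r))
    (Dx : Fin n → Module.End ℂ (Wexp n τ))
    (hDx : ∀ (i : Fin n) (m : Fin n →₀ ℕ) (s : Sloc n τ),
      Dx i (monomial m s) = monomial m (d i s) + X i * monomial m s)
    (j : Fin n) (k : ℕ) (m : Fin n →₀ ℕ) :
    (Dx j ^ k) (monomial m (1 : Sloc n τ) : Wexp n τ) =
      monomial (Finsupp.single j k + m) (1 : Sloc n τ) := by
  induction k generalizing m with
  | zero => simp
  | succ k ih =>
    rw [pow_succ, Module.End.mul_apply]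
    have h1 : Dx j (monomial m (1 : Sloc n τ) : Wexp n τ) =
        monomial (Finsupp.single j 1 + m) (1 : Sloc n τ) := by
      rw [hDx j m 1, d_one_eq_zero d hcomp j, map_zero, zero_add, X,
        monomial_mul, one_mul]
    rw [h1, ih, ← add_assoc, ← Finsupp.single_add]

theorem listProd_Dx (d : Fin n → ES n τ)
    (hcomp : ∀ (i : Fin n) (r : Rn n),
      d i (algebraMap (Rn n) (Sloc n τ) r) = algebraMap (Rn n) (Sloc n τ) (pderiv i r))
    (Dx : Fin n → Module.End ℂ (Wexp n τ))
    (hDx : ∀ (i : Fin n) (m : Fin n →₀ ℕ) (s : Sloc n τ),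
      Dx i (monomial m s) = monomial m (d i s) + X i * monomial m s)
    (m : Fin n →₀ ℕ) :
    ∀ (l : List (Fin n)) (k : Fin n →₀ ℕ),
      ((l.map fun i => Dx i ^ m i).prod) (monomial k (1 : Sloc n τ) : Wexp n τ) =
        monomial ((l.map fun i => Finsupp.single i (m i)).sum + k) (1 : Sloc n τ) := by
  intro l
  induction l with
  | nil => intro k; simp
  | cons a l ih =>
    intro k
    rw [List.map_cons, List.prod_cons, Module.End.mul_apply, ih k,
      Dx_pow_monomial_one d hcomp Dx hDx a (m a), List.map_cons, List.sum_cons, add_assoc]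

theorem cOpGen_Dx_one (d : Fin n → ES n τ)
    (hcomp : ∀ (i : Fin n) (r : Rn n),
      d i (algebraMap (Rn n) (Sloc n τ) r) = algebraMap (Rn n) (Sloc n τ) (pderiv i r))
    (Dx : Fin n → Module.End ℂ (Wexp n τ))
    (hDx : ∀ (i : Fin n) (m : Fin n →₀ ℕ) (s : Sloc n τ),
      Dx i (monomial m s) = monomial m (d i s) + X i * monomial m s)
    (q : Rn n) :
    cOpGen Dx q (1 : Wexp n τ) = toXi τ q := by
  have hone : (1 : Wexp n τ) = monomial 0 (1 : Sloc n τ) := by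
    rw [monomial_zero', C_1]
  unfold cOpGen
  rw [LinearMap.sum_apply]
  have hterm : ∀ m ∈ q.support,
      (q.coeff m • ((List.finRange n).map fun i => Dx i ^ m i).prod) (1 : Wexp n τ) =
        monomial m (algebraMap (Rn n) (Sloc n τ) (C (q.coeff m))) := by
    intro m _
    rw [LinearMap.smul_apply, hone, listProd_Dx d hcomp Dx hDx m (List.finRange n) 0]
    have hsum : ((List.finRange n).map fun i => Finsupp.single i (m i)).sum = m := by
      rw [← Fin.sum_univ_def fun i => Finsupp.single i (m i), Finsupp.univ_sum_single]
    rw [hsum, add_zero, smul_monomial]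
    congr 1
    rw [← algebraMap_C_eq (n := n) (τ := τ), Algebra.algebraMap_eq_smul_one]
  rw [Finset.sum_congr rfl hterm, toXi]
  conv_rhs => rw [as_sum q]
  rw [map_sum]
  refine Finset.sum_congr rfl fun m _ => ?_
  rw [map_monomial]
  rfl


end BAux

open BAux in
/-- Let `τ, q ∈ ℂ[x]` and let `ψ(x,ξ) = P(x,ξ)e^{⟨x,ξ⟩}` be the
Baker–Akhiezer function `ψ = (τ(x) ∘ q(∂_x) ∘ τ(x)⁻¹) e^{⟨x,ξ⟩}`, computed in the module
`ℂ[x,τ⁻¹][ξ]e^{⟨x,ξ⟩}` (on which `∂_{x_i}` acts as `∂_{x_i} + ξ_i` and `∂_{ξ_i}` acts as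
`∂_{ξ_i} + x_i`). Then `τ(∂_ξ) ψ(x,ξ) = q(ξ) τ(x) e^{⟨x,ξ⟩}`. -/
theorem bispectral_tau_identity (n : ℕ) (τ q : Rn n) (d : Fin n → ES n τ)
    (hLeib : ∀ (i : Fin n) (a b : Sloc n τ), d i (a * b) = a * d i b + d i a * b)
    (hcomp : ∀ (i : Fin n) (r : Rn n),
      d i (algebraMap (Rn n) (Sloc n τ) r) = algebraMap (Rn n) (Sloc n τ) (pderiv i r))
    (t : Sloc n τ) (ht : algebraMap (Rn n) (Sloc n τ) τ * t = 1)
    -- the twisted action of `∂_{x_i}` on `P(x,ξ)e^{⟨x,ξ⟩}`: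
    (Dx : Fin n → Module.End ℂ (Wexp n τ))
    (hDx : ∀ (i : Fin n) (m : Fin n →₀ ℕ) (s : Sloc n τ),
      Dx i (monomial m s) = monomial m (d i s) + X i * monomial m s)
    -- the twisted action of `∂_{ξ_i}` on `P(x,ξ)e^{⟨x,ξ⟩}`:
    (Dxi : Fin n → Module.End ℂ (Wexp n τ))
    (hDxi : ∀ (i : Fin n) (w : Wexp n τ),
      Dxi i w = pderiv i w + C (algebraMap (Rn n) (Sloc n τ) (X i)) * w) :
    cOpGen Dxi τ
        (C (algebraMap (Rn n) (Sloc n τ) τ) * cOpGen Dx q (C t)) =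
      toXi τ q * C (algebraMap (Rn n) (Sloc n τ) τ) := by
  set am := algebraMap (Rn n) (Sloc n τ) with ham
  have hcm : ∀ i j, Commute (Dxi i) (Dx j) :=
    BAux.dxi_dx_commute d hLeib hcomp Dx hDx Dxi hDxi
  have hML : ∀ i, Commute (LinearMap.mulLeft ℂ (C (am τ) : Wexp n τ)) (Dxi i) := by
    intro i
    apply LinearMap.ext
    intro w
    simp only [Module.End.mul_apply, LinearMap.mulLeft_apply, hDxi, pderiv_C_mul, mul_add]
    ring
  have h1 : Commute (LinearMap.mulLeft ℂ (C (am τ) : Wexp n τ)) (cOpGen Dxi τ) :=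
    BAux.commute_cOpGen hML τ
  have h3 : Commute (cOpGen Dxi τ) (cOpGen Dx q) :=
    BAux.commute_cOpGen
      (fun j => (BAux.commute_cOpGen (fun i => (hcm i j).symm) τ).symm) q
  have e1 : cOpGen Dxi τ (C (am τ) * cOpGen Dx q (C t)) =
      C (am τ) * cOpGen Dxi τ (cOpGen Dx q (C t)) := by
    have h := LinearMap.congr_fun h1.eq (cOpGen Dx q (C t))
    simp only [Module.End.mul_apply, LinearMap.mulLeft_apply] at h
    exact h.symm
  have e2 : cOpGen Dxi τ (cOpGen Dx q (C t)) = cOpGen Dx q (cOpGen Dxi τ (C t)) := by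
    have h := LinearMap.congr_fun h3.eq (C t)
    simpa only [Module.End.mul_apply] using h
  have e3 : cOpGen Dxi τ (C t : Wexp n τ) = 1 := by
    rw [BAux.cOpGen_Dxi_C Dxi hDxi τ t, ← ham, ht, C_1]
  rw [e1, e2, e3, BAux.cOpGen_Dx_one d hcomp Dx hDx q, mul_comm]
end
end

section
/- Let q ∈ ℂ[ξ] be irreducible and τ ∈ ℂ[x] with N > deg q. For every γ in the principal ideal (τ^N) ⊂ ℂ[x], the operator γ(x) ∘ τ(x) ∘ q(∂) ∘ τ(x)^{-1}, a priori in the localization D_τ, lies in the Weyl algebra A_n(ℂ); i.e. multiplying the Darboux operator D = τ q(∂) τ^{-1} on the left by any element of (τ^N) clears all denominators. -/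
open MvPolynomial

set_option maxHeartbeats 1000000
set_option synthInstance.maxHeartbeats 400000

noncomputable section

namespace Stmt19Aux

variable {n : ℕ} {τ : Rn n}

lemma mulE_mul (a b : Sloc n τ) : mulE (a * b) = (mulE a) * (mulE b) := by
  ext x
  simp [mulE, Module.End.mul_apply, mul_assoc]

lemma mem_d (d : Fin n → ES n τ) (i : Fin n) : d i ∈ WeylInS d :=
  Algebra.subset_adjoin (Or.inl ⟨i, rfl⟩)

lemma mem_mulE (d : Fin n → ES n τ) (r : Rn n) :
    mulE (algebraMap (Rn n) (Sloc n τ) r) ∈ WeylInS d :=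
  Algebra.subset_adjoin (Or.inr ⟨r, rfl⟩)

lemma d_comm (d : Fin n → ES n τ)
    (hLeib : ∀ (i : Fin n) (a b : Sloc n τ), d i (a * b) = a * d i b + d i a * b)
    (i : Fin n) (s : Sloc n τ) :
    d i * mulE s = mulE s * d i + mulE (d i s) := by
  ext b
  simp [mulE, Module.End.mul_apply, hLeib i s b]

/-- Key lemma: `τ^M ∘ (∂-word of length ℓ) ∘ (p · t^j)` is in the Weyl algebra
when `ℓ + j ≤ M`. -/
lemma key (d : Fin n → ES n τ)
    (hLeib : ∀ (i : Fin n) (a b : Sloc n τ), d i (a * b) = a * d i b + d i a * b)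
    (hcomp : ∀ (i : Fin n) (r : Rn n),
      d i (algebraMap (Rn n) (Sloc n τ) r) = algebraMap (Rn n) (Sloc n τ) (pderiv i r))
    (t : Sloc n τ) (ht : algebraMap (Rn n) (Sloc n τ) τ * t = 1) :
    ∀ (L : List (Fin n)) (M j : ℕ) (p : Rn n), L.length + j ≤ M →
      mulE (algebraMap (Rn n) (Sloc n τ) (τ ^ M)) *
        ((L.map d).prod * mulE (algebraMap (Rn n) (Sloc n τ) p * t ^ j)) ∈ WeylInS d := by
  intro L
  induction L with
  | nil =>
    intro M j p h
    simp only [List.map_nil, List.prod_nil, one_mul, List.length_nil, zero_add] at *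
    rw [← mulE_mul]
    have hs : algebraMap (Rn n) (Sloc n τ) (τ ^ M) *
        (algebraMap (Rn n) (Sloc n τ) p * t ^ j) =
        algebraMap (Rn n) (Sloc n τ) (τ ^ (M - j) * p) := by
      have e : τ ^ M = τ ^ (M - j) * τ ^ j := by rw [← pow_add]; congr 1; omega
      have h1 : (algebraMap (Rn n) (Sloc n τ) τ) ^ j * t ^ j = 1 := by
        rw [← mul_pow, ht, one_pow]
      rw [e]
      simp only [map_mul, map_pow]
      calc (algebraMap (Rn n) (Sloc n τ) τ) ^ (M - j) *
            (algebraMap (Rn n) (Sloc n τ) τ) ^ j *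
            (algebraMap (Rn n) (Sloc n τ) p * t ^ j)
          = (algebraMap (Rn n) (Sloc n τ) τ) ^ (M - j) *
            algebraMap (Rn n) (Sloc n τ) p *
            ((algebraMap (Rn n) (Sloc n τ) τ) ^ j * t ^ j) := by ring
        _ = _ := by rw [h1, mul_one]
    rw [hs]
    exact mem_mulE d _
  | cons i L ih =>
    intro M j p h
    have hM1 : 1 ≤ M := by simp at h; omega
    have hsplit : mulE (algebraMap (Rn n) (Sloc n τ) (τ ^ M)) *
        (((i :: L).map d).prod * mulE (algebraMap (Rn n) (Sloc n τ) p * t ^ j)) =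
        d i * (mulE (algebraMap (Rn n) (Sloc n τ) (τ ^ M)) *
          ((L.map d).prod * mulE (algebraMap (Rn n) (Sloc n τ) p * t ^ j))) +
        mulE (algebraMap (Rn n) (Sloc n τ) (-(pderiv i (τ ^ M)))) *
          ((L.map d).prod * mulE (algebraMap (Rn n) (Sloc n τ) p * t ^ j)) := by
      ext b
      simp only [List.map_cons, List.prod_cons, LinearMap.add_apply, Module.End.mul_apply,
        mulE, LinearMap.mulLeft_apply, map_neg]
      rw [hLeib, hcomp]
      try ring
    have h1 : d i * (mulE (algebraMap (Rn n) (Sloc n τ) (τ ^ M)) *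
        ((L.map d).prod * mulE (algebraMap (Rn n) (Sloc n τ) p * t ^ j))) ∈ WeylInS d :=
      Subalgebra.mul_mem _ (mem_d d i) (ih M j p (by simp at h ⊢; omega))
    have h2 : mulE (algebraMap (Rn n) (Sloc n τ) (-(pderiv i (τ ^ M)))) *
        ((L.map d).prod * mulE (algebraMap (Rn n) (Sloc n τ) p * t ^ j)) ∈ WeylInS d := by
      have hder : -(pderiv i (τ ^ M)) = (-((M : ℕ) • pderiv i τ)) * τ ^ (M - 1) := by
        rw [Derivation.leibniz_pow]
        simp only [smul_eq_mul, nsmul_eq_mul]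
        ring
      rw [hder, map_mul, mulE_mul, mul_assoc]
      exact Subalgebra.mul_mem _ (mem_mulE d _)
        (ih (M - 1) j p (by simp at h ⊢; omega))
    rw [hsplit]
    exact Subalgebra.add_mem _ h1 h2

/-- Flatten a product of powers of derivations into a word. -/
lemma flatten (d : Fin n → ES n τ) (m : Fin n →₀ ℕ) :
    ∀ l : List (Fin n), ∃ L : List (Fin n),
      L.length = (l.map fun i => m i).sum ∧
      (L.map d).prod = (l.map fun i => d i ^ m i).prod := by
  intro l
  induction l with
  | nil => exact ⟨[], by simp⟩
  | cons i l ih =>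
    obtain ⟨L, hlen, hprod⟩ := ih
    refine ⟨List.replicate (m i) i ++ L, ?_, ?_⟩
    · simp [hlen]
    · simp [List.map_append, List.prod_append, List.map_replicate, List.prod_replicate, hprod]

end Stmt19Aux

open Stmt19Aux in
theorem ideal_clears_denominators (n : ℕ) (τ q : Rn n) (hq : Irreducible q)
    (d : Fin n → ES n τ)
    (hLeib : ∀ (i : Fin n) (a b : Sloc n τ), d i (a * b) = a * d i b + d i a * b)
    (hcomp : ∀ (i : Fin n) (r : Rn n),
      d i (algebraMap (Rn n) (Sloc n τ) r) = algebraMap (Rn n) (Sloc n τ) (pderiv i r))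
    (t : Sloc n τ) (ht : algebraMap (Rn n) (Sloc n τ) τ * t = 1)
    (N : ℕ) (hN : q.totalDegree < N) :
    ∀ γ ∈ Ideal.span ({τ ^ N} : Set (Rn n)),
      mulE (algebraMap (Rn n) (Sloc n τ) γ) * DarbouxOp τ d q t ∈ WeylInS d := by
  intro γ hγ
  obtain ⟨c, hc⟩ := Ideal.mem_span_singleton.mp hγ
  subst hc
  have hsplit : mulE (algebraMap (Rn n) (Sloc n τ) (τ ^ N * c)) * DarbouxOp τ d q t =
      mulE (algebraMap (Rn n) (Sloc n τ) c) *
        (mulE (algebraMap (Rn n) (Sloc n τ) (τ ^ (N + 1))) * (cOpE d q * mulE t)) := by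
    ext b
    simp only [DarbouxOp, Module.End.mul_apply, mulE, LinearMap.mulLeft_apply, map_mul, map_pow]
    ring
  rw [hsplit]
  apply Subalgebra.mul_mem _ (mem_mulE d c)
  unfold cOpE
  rw [Finset.sum_mul, Finset.mul_sum]
  apply Subalgebra.sum_mem
  intro m hm
  rw [smul_mul_assoc, mul_smul_comm]
  apply Subalgebra.smul_mem
  obtain ⟨L, hlen, hprod⟩ := flatten d m (List.finRange n)
  rw [← hprod]
  have hlen' : L.length + 1 ≤ N + 1 := by
    rw [hlen]
    have h1 : ((List.finRange n).map fun i => m i).sum = ∑ i : Fin n, m i := by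
      rw [← Fin.sum_univ_def]
    have h2 : m.sum (fun _ e => e) = ∑ i : Fin n, m i :=
      Finsupp.sum_fintype m (fun _ e => e) (fun _ => rfl)
    have h3 := MvPolynomial.le_totalDegree hm
    rw [h1, ← h2]
    omega
  have := key d hLeib hcomp t ht L (N + 1) 1 1 hlen'
  simpa [pow_one, map_one, one_mul] using this
end
end
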